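/- For every p ∈ (p_cr, 1], the iterates θⁿ(p) converge to 1 as n → ∞, and for every p ∈ [0, p_cr) the iterates θⁿ(p) converge to 0, where θ(p) = p²(2−p)². -/

import Mathlib

/-!
Since `θ(p) - p = p (p - 1) (p² - 3p + 1)`, on `(p_cr, 1)` we have `p < θ(p) ≤ 1` and on `(0, p_cr)`
we have `0 ≤ θ(p) < p`. Hence the orbit of `p` is monotone and bounded, so it converges, and by
continuity its limit is a fixed point of `θ` in the same interval, which can only be `1`, resp. `0`.
-/

/-- The percolation function of the figure eight-graph: θ(p) = p²(2−p)². -/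
noncomputable def theta : ℝ → ℝ := fun p => p ^ 2 * (2 - p) ^ 2

open Filter Function Set Topology

section IterateConvergence

variable {α : Type*} [ConditionallyCompleteLinearOrder α] [TopologicalSpace α] [OrderTopology α]
  {f : α → α} {x b : α}

theorem tendsto_iterate_of_isFixedPt_of_lt_map (hf : Continuous f) (hxb : x ≤ b)
    (hb : IsFixedPt f b) (hlt : ∀ y ∈ Ico x b, y < f y ∧ f y ≤ b) :
    Tendsto (fun n => f^[n] x) atTop (𝓝 b) := by
  have hle : ∀ y ∈ Icc x b, y ≤ f y ∧ f y ≤ b := by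
    rintro y ⟨hxy, hyb⟩
    rcases hyb.lt_or_eq with hyb | rfl
    · exact ⟨(hlt y ⟨hxy, hyb⟩).1.le, (hlt y ⟨hxy, hyb⟩).2⟩
    · exact ⟨hb.ge, hb.le⟩
  have hmem : ∀ n, f^[n] x ∈ Icc x b := by
    intro n
    induction n with
    | zero => exact ⟨le_rfl, hxb⟩
    | succ n ih =>
      rw [iterate_succ_apply']
      exact ⟨ih.1.trans (hle _ ih).1, (hle _ ih).2⟩
  have hmono : Monotone fun n => f^[n] x := monotone_nat_of_le_succ fun n => by
    rw [iterate_succ_apply']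
    exact (hle _ (hmem n)).1
  have hbdd : BddAbove (range fun n => f^[n] x) := ⟨b, forall_mem_range.2 fun n => (hmem n).2⟩
  set L := ⨆ n, f^[n] x
  have hL : Tendsto (fun n => f^[n] x) atTop (𝓝 L) := tendsto_atTop_ciSup hmono hbdd
  have hxL : x ≤ L := le_ciSup_of_le hbdd 0 le_rfl
  have hLb : L ≤ b := ciSup_le fun n => (hmem n).2
  have hfix : IsFixedPt f L := isFixedPt_of_tendsto_iterate hL hf.continuousAt
  obtain rfl : L = b := hLb.eq_of_not_lt fun hLb => (hlt L ⟨hxL, hLb⟩).1.ne' hfix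
  exact hL

theorem tendsto_iterate_of_isFixedPt_of_map_lt (hf : Continuous f) (hbx : b ≤ x)
    (hb : IsFixedPt f b) (hlt : ∀ y ∈ Ioc b x, f y < y ∧ b ≤ f y) :
    Tendsto (fun n => f^[n] x) atTop (𝓝 b) :=
  tendsto_iterate_of_isFixedPt_of_lt_map (α := αᵒᵈ) hf hbx hb fun y hy => hlt y ⟨hy.2, hy.1⟩

end IterateConvergence

namespace Theta

noncomputable def pCr : ℝ := (3 - √5) / 2

lemma pCr_sq : pCr ^ 2 = 3 * pCr - 1 := by
  unfold pCr
  linear_combination (1 / 4 : ℝ) * Real.sq_sqrt (show (0 : ℝ) ≤ 5 by norm_num)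

lemma pCr_pos : 0 < pCr := by
  have : √5 < 3 := by
    rw [show (3 : ℝ) = √(3 ^ 2) by simp]
    exact Real.sqrt_lt_sqrt (by norm_num) (by norm_num)
  unfold pCr; linarith

lemma pCr_lt_one : pCr < 1 := by
  have : 1 < √5 := by
    rw [show (1 : ℝ) = √1 by simp]
    exact Real.sqrt_lt_sqrt (by norm_num) (by norm_num)
  unfold pCr; linarith

/-- The other root `3 - p_cr` of `X² - 3X + 1` exceeds 1, so on `[0, 1]` the last factor has the
sign of `p_cr - p`. -/
lemma theta_sub_self (p : ℝ) : theta p - p = p * (p - 1) * ((p - pCr) * (p - (3 - pCr))) := by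
  unfold theta
  linear_combination (p * (p - 1)) * pCr_sq

lemma lt_theta_self {p : ℝ} (hp : pCr < p) (hp1 : p < 1) : p < theta p := by
  have h : 0 < p * (p - 1) * ((p - pCr) * (p - (3 - pCr))) :=
    mul_pos_of_neg_of_neg (mul_neg_of_pos_of_neg (pCr_pos.trans hp) (by linarith))
      (mul_neg_of_pos_of_neg (by linarith) (by linarith [pCr_lt_one]))
  linarith [theta_sub_self p]

lemma theta_lt_self {p : ℝ} (hp0 : 0 < p) (hp : p < pCr) : theta p < p := by
  have h : p * (p - 1) * ((p - pCr) * (p - (3 - pCr))) < 0 :=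
    mul_neg_of_neg_of_pos (mul_neg_of_pos_of_neg hp0 (by linarith [pCr_lt_one]))
      (mul_pos_of_neg_of_neg (by linarith) (by linarith [pCr_lt_one]))
  linarith [theta_sub_self p]

lemma theta_nonneg (p : ℝ) : 0 ≤ theta p := by
  unfold theta; positivity

lemma theta_le_one {p : ℝ} (hp0 : 0 ≤ p) (hp2 : p ≤ 2) : theta p ≤ 1 := by
  have h : 1 - theta p = (1 - p) ^ 2 * (1 + p * (2 - p)) := by unfold theta; ring
  have : 0 ≤ (1 - p) ^ 2 * (1 + p * (2 - p)) := by
    have : 0 ≤ p * (2 - p) := mul_nonneg hp0 (by linarith)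
    positivity
  linarith

lemma continuous_theta : Continuous theta := by
  unfold theta; fun_prop

lemma isFixedPt_theta_zero : IsFixedPt theta 0 := by
  norm_num [IsFixedPt, theta]

lemma isFixedPt_theta_one : IsFixedPt theta 1 := by
  norm_num [IsFixedPt, theta]

end Theta

open Theta in
/-- For p ∈ (p_cr, 1] the iterates θⁿ(p) tend to 1, and for p ∈ [0, p_cr) they
tend to 0, where p_cr = (3−√5)/2. -/
theorem theta_iterates_converge :
    (∀ p ∈ Set.Ioc ((3 - Real.sqrt 5) / 2) (1:ℝ),
      Filter.Tendsto (fun n => theta^[n] p) Filter.atTop (nhds 1)) ∧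
    (∀ p ∈ Set.Ico (0:ℝ) ((3 - Real.sqrt 5) / 2),
      Filter.Tendsto (fun n => theta^[n] p) Filter.atTop (nhds 0)) := by
  refine ⟨fun p ⟨hp, hp1⟩ => ?_, fun p ⟨hp0, hp⟩ => ?_⟩
  · exact tendsto_iterate_of_isFixedPt_of_lt_map continuous_theta hp1 isFixedPt_theta_one
      fun y ⟨hpy, hy1⟩ => ⟨lt_theta_self (hp.trans_le hpy) hy1,
        theta_le_one ((pCr_pos.trans hp).le.trans hpy) (by linarith)⟩
  · exact tendsto_iterate_of_isFixedPt_of_map_lt continuous_theta hp0 isFixedPt_theta_zero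
      fun y ⟨hy0, hyp⟩ => ⟨theta_lt_self hy0 (hyp.trans_lt hp), theta_nonneg y⟩
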